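/- arXiv:1101.2418 — 2 statements merged into one kernel-verified Lean document; each statement's English description precedes it below -/
import Mathlib

section
/- Let g ≥ 1 be a natural number and let Γ_g be the genus-g surface group, i.e. the presented group on 2g generators a₁, b₁, …, a_g, b_g subject to the single relation ∏_{k=1}^{g} a_k b_k a_k⁻¹ b_k⁻¹ = 1. Then the abelianization of Γ_g is torsion-free: its only element of finite order is the identity. (Equivalently, the torsion subgroup of the first simplicial homology group H₁(Σ_g, ℤ) of the genus-g surface is trivial.) -/
/-!
The relator of `Γ_g` is a product of commutators, so it dies in every abelian group. Hence
abelianizing the presentation forgets the relation: `Γ_gᵃᵇ` is the abelianization of the free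
group on the `2g` generators, i.e. the free abelian group `ℤ^{2g}`, which is torsion-free.
-/

open scoped commutatorElement

/-- The single defining relation of the genus-`g` surface group:
`(a₁ b₁ a₁⁻¹ b₁⁻¹) ⋯ (a_g b_g a_g⁻¹ b_g⁻¹)`, where the generator `aₖ` is indexed by
`Sum.inl k` and `bₖ` by `Sum.inr k`. -/
def surfaceRelator (g : ℕ) : FreeGroup (Fin g ⊕ Fin g) :=
  (List.ofFn fun k : Fin g =>
    ⁅(FreeGroup.of (Sum.inl k) : FreeGroup (Fin g ⊕ Fin g)), FreeGroup.of (Sum.inr k)⁆).prod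

/-- The genus-`g` surface group `Γ_g`, presented on the `2g` generators
`a₁, b₁, …, a_g, b_g` subject to the single relation `∏ₖ aₖ bₖ aₖ⁻¹ bₖ⁻¹ = 1`. -/
abbrev SurfaceGroup (g : ℕ) : Type :=
  PresentedGroup ({surfaceRelator g} : Set (FreeGroup (Fin g ⊕ Fin g)))

instance FreeAbelianGroup.instIsAddTorsionFree {α : Type*} :
    IsAddTorsionFree (FreeAbelianGroup α) :=
  Function.Injective.isAddTorsionFree (FreeAbelianGroup.equivFinsupp α).toAddMonoidHom
    (FreeAbelianGroup.equivFinsupp α).injective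

-- `FreeAbelianGroup α` is defined as `Additive (Abelianization (FreeGroup α))`.
instance Abelianization.instIsMulTorsionFreeFreeGroup {α : Type*} :
    IsMulTorsionFree (Abelianization (FreeGroup α)) :=
  inferInstanceAs (IsMulTorsionFree (Multiplicative (FreeAbelianGroup α)))

namespace PresentedGroup

variable {α : Type*} {rels : Set (FreeGroup α)}

def abelianizationEquivOfSubsetCommutator (h : rels ⊆ commutator (FreeGroup α)) :
    Abelianization (PresentedGroup rels) ≃* Abelianization (FreeGroup α) :=
  have rels_trivial : ∀ r ∈ rels, FreeGroup.lift (Abelianization.of ∘ FreeGroup.of) r = 1 :=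
    fun _ hr => by
      rw [← FreeGroup.lift_unique (f := Abelianization.of ∘ FreeGroup.of) _ fun _ => rfl]
      exact Abelianization.commutator_subset_ker _ (h hr)
  MonoidHom.toMulEquiv (Abelianization.lift (toGroup rels_trivial)) (Abelianization.map (mk rels))
    (Abelianization.hom_ext _ _ <| ext fun _ => rfl)
    (Abelianization.hom_ext _ _ <| FreeGroup.ext_hom _ _ fun _ => rfl)

theorem isMulTorsionFree_abelianization_of_subset_commutator
    (h : rels ⊆ commutator (FreeGroup α)) :
    IsMulTorsionFree (Abelianization (PresentedGroup rels)) :=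
  Function.Injective.isMulTorsionFree (abelianizationEquivOfSubsetCommutator h).toMonoidHom
    (abelianizationEquivOfSubsetCommutator h).injective

end PresentedGroup

theorem surfaceRelator_mem_commutator (g : ℕ) :
    surfaceRelator g ∈ commutator (FreeGroup (Fin g ⊕ Fin g)) :=
  Subgroup.list_prod_mem _ <| List.forall_mem_ofFn_iff.mpr fun _ =>
    Subgroup.commutator_mem_commutator (Subgroup.mem_top _) (Subgroup.mem_top _)

theorem abelianization_surfaceGroup_torsionFree_general (g : ℕ) :
    ∀ x : Abelianization (SurfaceGroup g), IsOfFinOrder x → x = 1 :=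
  have := PresentedGroup.isMulTorsionFree_abelianization_of_subset_commutator
    (Set.singleton_subset_iff.mpr (surfaceRelator_mem_commutator g))
  fun _ hx => hx.eq_one'

/-- The abelianization of the genus-`g` surface group (i.e. the first homology group
`H₁(Σ_g, ℤ)`) is torsion-free: its only element of finite order is the identity. -/
theorem abelianization_surfaceGroup_torsionFree (g : ℕ) (hg : 1 ≤ g) :
    ∀ x : Abelianization (SurfaceGroup g), IsOfFinOrder x → x = 1 :=
  abelianization_surfaceGroup_torsionFree_general g
end

section
/- Kato's representation theorem for closed symmetric forms: let H be a complex Hilbert space, let D ⊆ H be a dense linear subspace, and let E : D × D → ℂ be a sesquilinear form which is symmetric (E(f, g) = conjugate of E(g, f) for all f, g ∈ D) and nonnegative (E(f, f) is a nonnegative real for all f ∈ D), and which is closed in the sense that D is complete with respect to the norm ‖f‖₁ = √(E(f,f) + ‖f‖²). Then there exists a unique densely defined self-adjoint operator K on H, with domain D(K) ⊆ D, which is positive (⟨K f, f⟩ ≥ 0 for all f ∈ D(K)), represents the form in the sense that ⟨K f, g⟩ = E(f, g) for all f ∈ D(K) and all g ∈ D, and whose domain D(K) is dense in D with respect to the norm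 ‖·‖₁. -/
/-!
The form inner product `E₁(f, g) = E(f, g) + ⟪f, g⟫` turns `D` into a Hilbert space `V`
(closedness is exactly completeness), and the inclusion `j : V → H` is bounded, injective and has
dense range. Hence `A = j j†` is bounded and injective with dense range, and since
`E₁(j† h, v) = ⟪h, j v⟫`, the operator `K = A⁻¹ - 1` on `ran A` satisfies `⟪K f, g⟫ = E(f, g)`.
It is symmetric and `K + 1` maps onto `H`, so `K` is self-adjoint. Every self-adjoint operator
representing `E` is contained in `K`, hence equal to it, self-adjoint operators being maximally
symmetric. Finally `ran A = j (ran j†)` is `‖·‖₁`-dense in `D` because `ran j†` is dense in `V`.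
-/

open scoped InnerProductSpace

/-- The form norm `‖f‖₁ = √(E(f,f) + ‖f‖²)` associated to a nonnegative symmetric
sesquilinear form `E` on a dense subspace `D` of a Hilbert space. -/
noncomputable def formNormOne {H : Type*} [NormedAddCommGroup H] [InnerProductSpace ℂ H]
    (D : Submodule ℂ H) (E : D →ₗ⋆[ℂ] D →ₗ[ℂ] ℂ) (f : D) : ℝ :=
  Real.sqrt ((E f f).re + ‖(f : H)‖ ^ 2)

section SelfAdjoint

open scoped LinearPMap

variable {𝕜 E : Type*} [RCLike 𝕜] [NormedAddCommGroup E] [InnerProductSpace 𝕜 E] [CompleteSpace E]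

theorem LinearPMap.isSelfAdjoint_of_forall_exists_apply_add_eq {T : E →ₗ.[𝕜] E}
    (hT : Dense (T.domain : Set E)) (hsymm : T.IsFormalAdjoint T)
    (hsurj : ∀ y, ∃ x : T.domain, T x + x = y) : IsSelfAdjoint T := by
  have hle : T ≤ T† := hsymm.le_adjoint hT
  refine (eq_of_le_of_domain_eq hle (le_antisymm hle.1 fun y hy => ?_)).symm
  obtain ⟨x, hx⟩ := hsurj (T† ⟨y, hy⟩ + y)
  set z : T†.domain := ⟨y, hy⟩ - ⟨x, hle.1 x.2⟩
  -- `T† + 1` kills `z`, and the range of `T + 1` is everything, so `z ⊥ H`.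
  have hz : T† z + z = 0 := by
    have hTx : T x = T† ⟨x, hle.1 x.2⟩ := hle.2 rfl
    rw [map_sub, ← hTx, Submodule.coe_sub, Submodule.coe_mk]
    linear_combination (norm := abel) -hx
  have hz_zero : (z : E) = 0 := by
    obtain ⟨w, hw⟩ := hsurj z
    rw [← inner_self_eq_zero (𝕜 := 𝕜)]
    calc ⟪(z : E), z⟫_𝕜 = ⟪T w + w, z⟫_𝕜 := by rw [hw]
      _ = ⟪(w : E), T† z + z⟫_𝕜 := by
        rw [inner_add_left, inner_add_right, (adjoint_isFormalAdjoint hT).symm w z]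
      _ = 0 := by rw [hz, inner_zero_right]
  rw [show y = x from sub_eq_zero.mp hz_zero]
  exact x.2

theorem IsSelfAdjoint.eq_of_le {S T : E →ₗ.[𝕜] E} (hS : IsSelfAdjoint S) (hST : S ≤ T)
    (hT : T.IsFormalAdjoint T) : S = T := by
  refine le_antisymm hST ?_
  have hST' : S.IsFormalAdjoint T := fun x y => by
    rw [hST.2 (y := ⟨x, hST.1 x.2⟩) rfl, hT]
  simpa only [LinearPMap.isSelfAdjoint_def.mp hS] using hST'.le_adjoint hS.dense_domain

end SelfAdjoint

namespace ContinuousLinearMap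

variable {𝕜 V H : Type*} [RCLike 𝕜]
  [NormedAddCommGroup V] [InnerProductSpace 𝕜 V] [CompleteSpace V]
  [NormedAddCommGroup H] [InnerProductSpace 𝕜 H] [CompleteSpace H] {j : V →L[𝕜] H}

theorem denseRange_iff_injective_adjoint : DenseRange j ↔ Function.Injective (adjoint j) := by
  rw [← coe_coe (adjoint j), ← LinearMap.ker_eq_bot, ← orthogonal_range,
    ← Submodule.topologicalClosure_eq_top_iff, ← Submodule.dense_iff_topologicalClosure_eq_top,
    DenseRange, LinearMap.coe_range, coe_coe]

theorem denseRange_adjoint_of_injective (hj : Function.Injective j) : DenseRange (adjoint j) := by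
  rwa [denseRange_iff_injective_adjoint, adjoint_adjoint]

theorem injective_comp_adjoint_of_denseRange (hj : DenseRange j) :
    Function.Injective (j ∘L adjoint j) := by
  rwa [coe_comp, self_comp_adjoint_injective_iff, ← denseRange_iff_injective_adjoint]

theorem denseRange_comp_adjoint_of_denseRange (hj : DenseRange j) :
    DenseRange (j ∘L adjoint j) := by
  rw [denseRange_iff_injective_adjoint, adjoint_comp, adjoint_adjoint]
  exact injective_comp_adjoint_of_denseRange hj

noncomputable def katoOperator (hj : DenseRange j) : H →ₗ.[𝕜] H where
  domain := (j ∘L adjoint j).range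
  toFun :=
    ((LinearEquiv.ofInjective _ (injective_comp_adjoint_of_denseRange hj)).symm : _ →ₗ[𝕜] H) -
      (j ∘L adjoint j).range.subtype

variable (hj : DenseRange j)

theorem mem_katoOperator_domain {f : H} :
    f ∈ (katoOperator hj).domain ↔ ∃ h, j (adjoint j h) = f :=
  Iff.rfl

theorem katoOperator_domain_le : (katoOperator hj).domain ≤ j.range :=
  LinearMap.range_comp_le_range _ _

theorem dense_katoOperator_domain : Dense ((katoOperator hj).domain : Set H) := by
  rw [katoOperator, LinearMap.coe_range]
  exact denseRange_comp_adjoint_of_denseRange hj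

theorem katoOperator_apply (f : (katoOperator hj).domain) {h : H} (hf : j (adjoint j h) = f) :
    katoOperator hj f = h - f := by
  obtain rfl : LinearEquiv.ofInjective _ (injective_comp_adjoint_of_denseRange hj) h = f :=
    Subtype.ext hf
  exact congrArg (· - j (adjoint j h)) (LinearEquiv.symm_apply_apply _ h)

theorem isFormalAdjoint_katoOperator : (katoOperator hj).IsFormalAdjoint (katoOperator hj) := by
  rintro ⟨_, hf⟩ ⟨_, hg⟩
  obtain ⟨h, rfl⟩ := (mem_katoOperator_domain hj).mp hf
  obtain ⟨k, rfl⟩ := (mem_katoOperator_domain hj).mp hg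
  rw [katoOperator_apply hj _ rfl, katoOperator_apply hj _ rfl]
  dsimp only
  rw [inner_sub_left, inner_sub_right, ← adjoint_inner_left, adjoint_inner_right]

theorem isSelfAdjoint_katoOperator : IsSelfAdjoint (katoOperator hj) :=
  LinearPMap.isSelfAdjoint_of_forall_exists_apply_add_eq (dense_katoOperator_domain hj)
    (isFormalAdjoint_katoOperator hj) fun h => ⟨⟨_, (mem_katoOperator_domain hj).mpr ⟨h, rfl⟩⟩,
      by rw [katoOperator_apply hj _ rfl, sub_add_cancel]⟩

theorem inner_katoOperator_apply (hinj : Function.Injective j) {u : V}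
    (hu : j u ∈ (katoOperator hj).domain) (v : V) :
    ⟪katoOperator hj ⟨j u, hu⟩, j v⟫_𝕜 = ⟪u, v⟫_𝕜 - ⟪j u, j v⟫_𝕜 := by
  obtain ⟨h, hh⟩ := (mem_katoOperator_domain hj).mp hu
  rw [katoOperator_apply hj _ hh, inner_sub_left, ← adjoint_inner_left, hinj hh]

theorem dense_preimage_katoOperator_domain (hinj : Function.Injective j) :
    Dense (j ⁻¹' (katoOperator hj).domain) := by
  refine (denseRange_adjoint_of_injective hinj).mono ?_
  rintro _ ⟨h, rfl⟩
  exact (mem_katoOperator_domain hj).mpr ⟨h, rfl⟩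

theorem eq_katoOperator {T : H →ₗ.[𝕜] H} (hT : IsSelfAdjoint T)
    (hdom : T.domain ≤ j.range)
    (hrep : ∀ {u : V} (hu : j u ∈ T.domain) (v : V),
      ⟪T ⟨j u, hu⟩, j v⟫_𝕜 = ⟪u, v⟫_𝕜 - ⟪j u, j v⟫_𝕜) :
    T = katoOperator hj := by
  -- For `f = j u`, `hrep` says `⟪T f + f, j v⟫ = ⟪u, v⟫`, that is `j† (T f + f) = u`.
  have hpre : ∀ f : T.domain, j (adjoint j (T f + f)) = f := by
    rintro ⟨f, hf⟩
    obtain ⟨u, hu⟩ := hdom hf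
    rw [coe_coe] at hu
    subst hu
    have : adjoint j (T ⟨j u, hf⟩ + j u) = u := ext_inner_right 𝕜 fun v => by
      rw [adjoint_inner_left, inner_add_left, hrep hf v, sub_add_cancel]
    rw [this]
  refine hT.eq_of_le ⟨fun f hf => (mem_katoOperator_domain hj).mpr ⟨_, hpre ⟨f, hf⟩⟩,
    fun {f g} hfg => ?_⟩ (isFormalAdjoint_katoOperator hj)
  rw [katoOperator_apply hj g ((hpre f).trans hfg), ← hfg, add_sub_cancel_right]

end ContinuousLinearMap

namespace LinearMap

open scoped ComplexOrder

theorem isPosSemidef_of_forall_exists_ofReal {M : Type*} [AddCommGroup M] [Module ℂ M]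
    {B : M →ₗ⋆[ℂ] M →ₗ[ℂ] ℂ} (hsymm : ∀ x y, B x y = starRingEnd ℂ (B y x))
    (hpos : ∀ x, ∃ r : ℝ, 0 ≤ r ∧ B x x = r) : B.IsPosSemidef where
  eq x y := (hsymm y x).symm
  nonneg x := by
    obtain ⟨r, hr, hx⟩ := hpos x
    exact hx ▸ Complex.zero_le_real.mpr hr

end LinearMap

/-- A copy of `D`, to carry the inner product `E₁(f, g) = E(f, g) + ⟪f, g⟫`. -/
structure FormSpace {H : Type*} [NormedAddCommGroup H] [InnerProductSpace ℂ H] {D : Submodule ℂ H}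
    (E : D →ₗ⋆[ℂ] D →ₗ[ℂ] ℂ) where
  ofD ::
  toD : D

namespace FormSpace

open scoped ComplexOrder

variable {H : Type*} [NormedAddCommGroup H] [InnerProductSpace ℂ H] {D : Submodule ℂ H}
  {E : D →ₗ⋆[ℂ] D →ₗ[ℂ] ℂ}

def equivD : FormSpace E ≃ D := ⟨toD, ofD, fun _ => rfl, fun _ => rfl⟩

instance : AddCommGroup (FormSpace E) := equivD.addCommGroup
instance : Module ℂ (FormSpace E) := equivD.module ℂ

@[simp] theorem toD_add (f g : FormSpace E) : (f + g).toD = f.toD + g.toD := rfl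
@[simp] theorem toD_sub (f g : FormSpace E) : (f - g).toD = f.toD - g.toD := rfl
@[simp] theorem toD_smul (c : ℂ) (f : FormSpace E) : (c • f).toD = c • f.toD := rfl

theorem re_apply_self_add_inner_self (f : D) :
    (E f f + ⟪(f : H), (f : H)⟫_ℂ).re = (E f f).re + ‖(f : H)‖ ^ 2 := by
  rw [Complex.add_re, ← inner_self_eq_norm_sq (𝕜 := ℂ)]
  rfl

variable [hE : Fact E.IsPosSemidef]

theorem re_apply_self_nonneg (f : D) : 0 ≤ (E f f).re :=
  (Complex.nonneg_iff.mp (hE.out.isNonneg.nonneg f)).1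

@[reducible] noncomputable def innerProductCore : InnerProductSpace.Core ℂ (FormSpace E) where
  inner f g := E f.toD g.toD + ⟪(f.toD : H), (g.toD : H)⟫_ℂ
  conj_inner_symm f g := by rw [map_add, hE.out.isSymm.eq, inner_conj_symm]
  re_inner_nonneg f := by
    rw [RCLike.re_to_complex, re_apply_self_add_inner_self]
    have := re_apply_self_nonneg (E := E) f.toD
    positivity
  add_left f g h := by
    rw [toD_add, map_add, LinearMap.add_apply, Submodule.coe_add, inner_add_left]
    ring
  smul_left f g c := by
    rw [toD_smul, LinearMap.map_smulₛₗ, LinearMap.smul_apply, Submodule.coe_smul, inner_smul_left,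
      smul_eq_mul]
    ring
  definite f hf := by
    have h0 := congrArg Complex.re hf
    rw [re_apply_self_add_inner_self, Complex.zero_re] at h0
    have : ‖(f.toD : H)‖ = 0 := by
      nlinarith [re_apply_self_nonneg (E := E) f.toD, norm_nonneg (f.toD : H)]
    exact congrArg ofD (Subtype.ext (norm_eq_zero.mp this))

noncomputable instance : NormedAddCommGroup (FormSpace E) :=
  innerProductCore.toNormedAddCommGroup

noncomputable instance : InnerProductSpace ℂ (FormSpace E) :=
  InnerProductSpace.ofCore innerProductCore.toCore

theorem inner_def (f g : FormSpace E) :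
    ⟪f, g⟫_ℂ = E f.toD g.toD + ⟪(f.toD : H), (g.toD : H)⟫_ℂ :=
  rfl

theorem norm_def (f : FormSpace E) : ‖f‖ = formNormOne D E f.toD := by
  rw [norm_eq_sqrt_re_inner (𝕜 := ℂ), inner_def, RCLike.re_to_complex, re_apply_self_add_inner_self]
  rfl

theorem completeSpace
    (hclosed : ∀ u : ℕ → D,
      (∀ ε > 0, ∃ N : ℕ, ∀ m ≥ N, ∀ n ≥ N, formNormOne D E (u m - u n) < ε) →
      ∃ v : D, Filter.Tendsto (fun n => formNormOne D E (u n - v)) Filter.atTop (nhds 0)) :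
    CompleteSpace (FormSpace E) := by
  refine Metric.complete_of_cauchySeq_tendsto fun u hu => ?_
  rw [Metric.cauchySeq_iff] at hu
  obtain ⟨v, hv⟩ := hclosed (fun n => (u n).toD) fun ε hε => by
    simpa only [dist_eq_norm, norm_def, toD_sub] using hu ε hε
  exact ⟨ofD v, tendsto_iff_norm_sub_tendsto_zero.mpr (by simpa only [norm_def, toD_sub] using hv)⟩

theorem norm_coe_toD_le (f : FormSpace E) : ‖(f.toD : H)‖ ≤ ‖f‖ := by
  rw [norm_def]
  exact Real.le_sqrt_of_sq_le (le_add_of_nonneg_left (re_apply_self_nonneg f.toD))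

noncomputable def inclusion : FormSpace E →L[ℂ] H :=
  LinearMap.mkContinuous
    { toFun := fun f => f.toD
      map_add' := fun _ _ => rfl
      map_smul' := fun _ _ => rfl } 1
    fun f => by rw [one_mul]; exact norm_coe_toD_le f

theorem injective_inclusion : Function.Injective (inclusion (E := E)) :=
  fun _ _ h => congrArg ofD (Subtype.ext h)

theorem range_inclusion : (inclusion (E := E)).range = D := by
  ext f
  exact ⟨fun ⟨g, hg⟩ => hg ▸ g.toD.2, fun hf => ⟨ofD ⟨f, hf⟩, rfl⟩⟩

theorem denseRange_inclusion (hD : Dense (D : Set H)) : DenseRange (inclusion (E := E)) := by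
  rwa [DenseRange, ← ContinuousLinearMap.coe_coe, ← LinearMap.coe_range, range_inclusion]

theorem inner_sub_inner_inclusion (f g : FormSpace E) :
    ⟪f, g⟫_ℂ - ⟪inclusion f, inclusion g⟫_ℂ = E f.toD g.toD :=
  add_sub_cancel_right _ _

end FormSpace

/-- **Kato's representation theorem for closed symmetric forms.**
Let `H` be a complex Hilbert space, `D ⊆ H` a dense linear subspace and `E` a sesquilinear
form on `D` which is symmetric, nonnegative and closed (i.e. `D` is complete in the norm
`‖f‖₁ = √(E(f,f) + ‖f‖²)`).  Then there is a unique densely defined self-adjoint operator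
`K` on `H`, with domain contained in `D`, which is positive, satisfies
`⟨K f, g⟩ = E(f, g)` for all `f ∈ D(K)` and `g ∈ D`, and whose domain is `‖·‖₁`-dense
in `D`. -/
theorem kato_representation_theorem
    {H : Type*} [NormedAddCommGroup H] [InnerProductSpace ℂ H] [CompleteSpace H]
    (D : Submodule ℂ H) (hD : Dense (D : Set H))
    (E : D →ₗ⋆[ℂ] D →ₗ[ℂ] ℂ)
    (hsymm : ∀ f g : D, E f g = starRingEnd ℂ (E g f))
    (hpos : ∀ f : D, ∃ r : ℝ, 0 ≤ r ∧ E f f = (r : ℂ))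
    (hclosed : ∀ u : ℕ → D,
      (∀ ε > 0, ∃ N : ℕ, ∀ m ≥ N, ∀ n ≥ N, formNormOne D E (u m - u n) < ε) →
      ∃ v : D, Filter.Tendsto (fun n => formNormOne D E (u n - v)) Filter.atTop (nhds 0)) :
    ∃! K : H →ₗ.[ℂ] H,
      Dense (K.domain : Set H) ∧
      ∃ hsub : K.domain ≤ D,
        IsSelfAdjoint K ∧
        (∀ f : K.domain, ∃ r : ℝ, 0 ≤ r ∧ ⟪K f, (f : H)⟫_ℂ = (r : ℂ)) ∧
        (∀ f : K.domain, ∀ g : D,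
          ⟪K f, (g : H)⟫_ℂ = E (⟨(f : H), hsub f.2⟩ : D) g) ∧
        (∀ g : D, ∀ ε > 0, ∃ f : K.domain,
          formNormOne D E ((⟨(f : H), hsub f.2⟩ : D) - g) < ε) := by
  have := Fact.mk (LinearMap.isPosSemidef_of_forall_exists_ofReal hsymm hpos)
  have := FormSpace.completeSpace hclosed
  have hj : DenseRange (FormSpace.inclusion (E := E)) := FormSpace.denseRange_inclusion hD
  have hinj := FormSpace.injective_inclusion (E := E)
  have hsub : (ContinuousLinearMap.katoOperator hj).domain ≤ D :=
    (ContinuousLinearMap.katoOperator_domain_le hj).trans FormSpace.range_inclusion.le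
  have hrep : ∀ (f : (ContinuousLinearMap.katoOperator hj).domain) (g : D),
      ⟪ContinuousLinearMap.katoOperator hj f, (g : H)⟫_ℂ = E ⟨f, hsub f.2⟩ g := fun f g =>
    (ContinuousLinearMap.inner_katoOperator_apply hj hinj (u := .ofD ⟨f, hsub f.2⟩) f.2
      (.ofD g)).trans (FormSpace.inner_sub_inner_inclusion _ _)
  refine ⟨ContinuousLinearMap.katoOperator hj, ⟨ContinuousLinearMap.dense_katoOperator_domain hj,
    hsub, ContinuousLinearMap.isSelfAdjoint_katoOperator hj, fun f => ?_, hrep,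
    fun g ε hε => ?_⟩, ?_⟩
  · obtain ⟨r, hr, hf⟩ := hpos ⟨f, hsub f.2⟩
    exact ⟨r, hr, (hrep f _).trans hf⟩
  · obtain ⟨u, hu, hlt⟩ := (ContinuousLinearMap.dense_preimage_katoOperator_domain hj
      hinj).exists_dist_lt (.ofD g) hε
    exact ⟨⟨_, hu⟩, by rwa [dist_comm, dist_eq_norm, FormSpace.norm_def] at hlt⟩
  · rintro T ⟨-, hTsub, hT, -, hTrep, -⟩
    exact ContinuousLinearMap.eq_katoOperator hj hT (hTsub.trans FormSpace.range_inclusion.ge)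
      fun hu v => (hTrep ⟨_, hu⟩ v.toD).trans (FormSpace.inner_sub_inner_inclusion _ _).symm
end
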